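/- arXiv:2410.13012 — 4 statements merged into one kernel-verified Lean document; each statement's English description precedes it below -/
import Mathlib

section
/- Let f : ℕ → ℕ. Suppose that for every domain X' and every binary concept class H ⊆ {0,1}^{X'} with finite VC dimension d, there exists an exact realizable sample compression scheme for H of size at most f(d). Then for every multiclass concept class C ⊆ Y^X with finite label set Y (|Y| ≥ 2) and finite graph dimension d_G, there exists an exact realizable sample compression scheme for C of size at most f(d_G)·(1 + ⌈log₂ |Y|⌉). -/
universe u v

/-- A finite sample `S` is realizable by the concept class `C`. -/
def Realizable {X Y : Type*} (C : Set (X → Y)) (S : List (X × Y)) : Prop :=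
  ∃ c ∈ C, ∀ p ∈ S, c p.1 = p.2

/-- `(κ, ρ)` is an exact realizable sample compression scheme for `C` of size at most `k`:
`κ` outputs a subsequence of `S` together with a bitstring, of total length at most `k`
on realizable samples, and `ρ` reconstructs a sample-consistent predictor. -/
def IsExactRealizableScheme {X Y : Type*} (C : Set (X → Y)) (k : ℕ)
    (κ : List (X × Y) → List (X × Y) × List Bool)
    (ρ : List (X × Y) × List Bool → X → Y) : Prop :=
  (∀ S : List (X × Y), (κ S).1 ⊆ S) ∧
  (∀ S : List (X × Y), Realizable C S → (κ S).1.length + (κ S).2.length ≤ k) ∧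
  (∀ S : List (X × Y), Realizable C S → ∀ p ∈ S, ρ (κ S) p.1 = p.2)

/-- `n` points of `X` are shattered by the binary concept class `H ⊆ {0,1}^X`. -/
def ShattersN {X : Type*} (H : Set (X → Bool)) (n : ℕ) : Prop :=
  ∃ x : Fin n → X, ∀ b : Fin n → Bool, ∃ h ∈ H, ∀ i, h (x i) = b i

/-- `H` has (finite) VC dimension exactly `d`. -/
def IsVCDim {X : Type*} (H : Set (X → Bool)) (d : ℕ) : Prop :=
  ShattersN H d ∧ ¬ ShattersN H (d + 1)

/-- `n` points of `X` are G-shattered by the multiclass concept class `C ⊆ Y^X`. -/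
def GShattersN {X Y : Type*} (C : Set (X → Y)) (n : ℕ) : Prop :=
  ∃ (x : Fin n → X) (y : Fin n → Y),
    ∀ b : Fin n → Bool, ∃ c ∈ C, ∀ i, (c (x i) = y i ↔ b i = true)

/-- `C` has (finite) graph dimension exactly `d`. -/
def IsGraphDim {X Y : Type*} (C : Set (X → Y)) (d : ℕ) : Prop :=
  GShattersN C d ∧ ¬ GShattersN C (d + 1)

/-!
The graph class `{(x, y) ↦ [c x = y] : c ∈ C}` has VC dimension `d_G`, so it has a binary
scheme of size `f d_G`. A multiclass sample `S` is blown up into the binary sample of all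
`((xᵢ, y), [y = yᵢ])`, `y ∈ Y`, which the graph class realizes, and compressed with the binary
scheme. Each kept binary point `((xᵢ, y), b)` is stored as the sample point `(xᵢ, yᵢ)` together
with a `⌈log₂ |Y|⌉`-bit code of `y`; from these the binary point is recovered, since
`b = [y = yᵢ]`. The reconstructed binary hypothesis `h` satisfies `h (xᵢ, y) = [y = yᵢ]`, so
`yᵢ` is the unique label accepted by `h` at `xᵢ`.
-/

open Function

section Chunks

variable {α β : Type*}

def splitChunks (L : ℕ) : List α → List β → List (α × List β) × List β
  | [], bs => ([], bs)
  | a :: as, bs =>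
    let r := splitChunks L as (bs.drop L)
    ((a, bs.take L) :: r.1, r.2)

theorem splitChunks_map_fst_flatMap_snd_append {L : ℕ} (l : List (α × List β)) (rest : List β)
    (hl : ∀ p ∈ l, p.2.length = L) :
    splitChunks L (l.map Prod.fst) (l.flatMap Prod.snd ++ rest) = (l, rest) := by
  induction l with
  | nil => rfl
  | cons p l ih =>
    have hp : p.2.length = L := hl p (List.mem_cons_self ..)
    simp only [List.map_cons, List.flatMap_cons, List.append_assoc, splitChunks,
      List.take_left' hp, List.drop_left' hp,
      ih fun q hq => hl q (List.mem_cons_of_mem _ hq)]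

theorem length_flatMap_of_length_eq {L : ℕ} (l : List α) (f : α → List β)
    (hf : ∀ a, (f a).length = L) : (l.flatMap f).length = l.length * L := by
  simp [List.length_flatMap, hf, List.map_const', List.sum_replicate]

end Chunks

theorem exists_injective_bitstring (Y : Type*) [Fintype Y] :
    ∃ enc : Y → List Bool, Injective enc ∧ ∀ y, (enc y).length = Nat.clog 2 (Fintype.card Y) := by
  have hcard : Fintype.card Y ≤ Fintype.card (List.Vector Bool (Nat.clog 2 (Fintype.card Y))) := by
    rw [card_vector, Fintype.card_bool]
    exact Nat.le_pow_clog one_lt_two _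
  obtain ⟨e⟩ := Embedding.nonempty_of_card_le hcard
  exact ⟨fun y => (e y).toList, List.Vector.toList_injective.comp e.injective,
    fun y => (e y).toList_length⟩

variable {X Y : Type*} [DecidableEq Y]

def graphClass (C : Set (X → Y)) : Set (X × Y → Bool) :=
  (fun c q => decide (c q.1 = q.2)) '' C

theorem shattersN_graphClass_iff (C : Set (X → Y)) (n : ℕ) :
    ShattersN (graphClass C) n ↔ GShattersN C n := by
  constructor
  · rintro ⟨z, hz⟩
    refine ⟨fun i => (z i).1, fun i => (z i).2, fun b => ?_⟩
    obtain ⟨-, ⟨c, hc, rfl⟩, hcb⟩ := hz b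
    exact ⟨c, hc, fun i => by simpa using congrArg (· = true) (hcb i)⟩
  · rintro ⟨x, y, hxy⟩
    refine ⟨fun i => (x i, y i), fun b => ?_⟩
    obtain ⟨c, hc, hcb⟩ := hxy b
    exact ⟨_, ⟨c, hc, rfl⟩, fun i => by simpa using Bool.eq_iff_iff.mpr (by simpa using hcb i)⟩

theorem IsGraphDim.isVCDim_graphClass {C : Set (X → Y)} {d : ℕ} (h : IsGraphDim C d) :
    IsVCDim (graphClass C) d := by
  simpa only [IsVCDim, IsGraphDim, shattersN_graphClass_iff] using h

variable [Fintype Y]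

noncomputable def augment (S : List (X × Y)) : List ((X × Y) × Bool) :=
  S.flatMap fun p => Finset.univ.toList.map fun y => ((p.1, y), decide (p.2 = y))

theorem mem_augment {S : List (X × Y)} {t : (X × Y) × Bool} :
    t ∈ augment S ↔ ∃ p ∈ S, ∃ y, t = ((p.1, y), decide (p.2 = y)) := by
  simp [augment, eq_comm]

theorem eq_decide_of_mem_augment {S : List (X × Y)} {c : X → Y} (hc : ∀ p ∈ S, c p.1 = p.2)
    {t : (X × Y) × Bool} (ht : t ∈ augment S) : t.2 = decide (c t.1.1 = t.1.2) := by
  obtain ⟨p, hp, y, rfl⟩ := mem_augment.mp ht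
  simp [hc p hp]

theorem Realizable.augment {C : Set (X → Y)} {S : List (X × Y)} (h : Realizable C S) :
    Realizable (graphClass C) (augment S) := by
  obtain ⟨c, hc, hcS⟩ := h
  exact ⟨_, ⟨c, hc, rfl⟩, fun t ht => (eq_decide_of_mem_augment hcS ht).symm⟩

open Classical in
noncomputable def samplePointAt (S : List (X × Y)) (q : X × Y) : X × Y :=
  if h : ∃ p ∈ S, p.1 = q.1 then h.choose else q

theorem samplePointAt_of_mem_augment {S : List (X × Y)} {t : (X × Y) × Bool}
    (ht : t ∈ augment S) : samplePointAt S t.1 ∈ S ∧ (samplePointAt S t.1).1 = t.1.1 := by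
  have h : ∃ p ∈ S, p.1 = t.1.1 := by
    obtain ⟨p, hp, y, rfl⟩ := mem_augment.mp ht
    exact ⟨p, hp, rfl⟩
  rw [samplePointAt, dif_pos h]
  exact h.choose_spec

variable (enc : Y → List Bool)
  (κ₀ : List ((X × Y) × Bool) → List ((X × Y) × Bool) × List Bool)

noncomputable def graphStored (S : List (X × Y)) : List ((X × Y) × List Bool) :=
  (κ₀ (augment S)).1.map fun t => (samplePointAt S t.1, enc t.1.2)

noncomputable def graphCompress (S : List (X × Y)) : List (X × Y) × List Bool :=
  ((graphStored enc κ₀ S).map Prod.fst,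
    (graphStored enc κ₀ S).flatMap Prod.snd ++ (κ₀ (augment S)).2)

def decodeGraphPoint (dec : List Bool → Y) (s : (X × Y) × List Bool) : (X × Y) × Bool :=
  ((s.1.1, dec s.2), decide (s.1.2 = dec s.2))

noncomputable def graphReconstruct [Nonempty Y] (L : ℕ) (dec : List Bool → Y)
    (ρ₀ : List ((X × Y) × Bool) × List Bool → X × Y → Bool) (D : List (X × Y) × List Bool) :
    X → Y :=
  let split := splitChunks L D.1 D.2
  let h := ρ₀ (split.1.map (decodeGraphPoint dec), split.2)
  fun x => Classical.epsilon fun y => h (x, y) = true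

variable {enc κ₀}

theorem map_decodeGraphPoint_graphStored {dec : List Bool → Y} (hdec : LeftInverse dec enc)
    (hsub : ∀ S, (κ₀ S).1 ⊆ S) {S : List (X × Y)} {c : X → Y} (hc : ∀ p ∈ S, c p.1 = p.2) :
    (graphStored enc κ₀ S).map (decodeGraphPoint dec) = (κ₀ (augment S)).1 := by
  rw [graphStored, List.map_map]
  refine List.map_congr_left (fun t ht => ?_) |>.trans (List.map_id _)
  have ht' := hsub _ ht
  obtain ⟨hmem, hfst⟩ := samplePointAt_of_mem_augment ht'
  have hsnd : (samplePointAt S t.1).2 = c t.1.1 := by rw [← hc _ hmem, hfst]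
  simp only [comp_apply, decodeGraphPoint, hdec _, hfst, hsnd, id,
    ← eq_decide_of_mem_augment hc ht']

theorem IsExactRealizableScheme.of_graphClass [Nonempty Y] {C : Set (X → Y)} {k L : ℕ}
    (henc : Injective enc) (hlen : ∀ y, (enc y).length = L)
    {ρ₀ : List ((X × Y) × Bool) × List Bool → X × Y → Bool}
    (h : IsExactRealizableScheme (graphClass C) k κ₀ ρ₀) :
    IsExactRealizableScheme C (k * (1 + L)) (graphCompress enc κ₀)
      (graphReconstruct L (invFun enc) ρ₀) := by
  obtain ⟨hsub, hsize, hcons⟩ := h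
  refine ⟨fun S p hp => ?_, fun S hS => ?_, fun S hS p hp => ?_⟩
  · obtain ⟨t, ht, rfl⟩ := List.mem_map.mp hp
    obtain ⟨s, hs, rfl⟩ := List.mem_map.mp ht
    exact (samplePointAt_of_mem_augment (hsub _ hs)).1
  · have hk := hsize _ hS.augment
    have hbits : ((graphStored enc κ₀ S).flatMap Prod.snd).length
        = (κ₀ (augment S)).1.length * L := by
      rw [graphStored, List.flatMap_map]
      exact length_flatMap_of_length_eq _ _ fun t => hlen t.1.2
    rw [graphCompress, List.length_append, hbits, List.length_map, graphStored, List.length_map]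
    nlinarith
  · have hlabel : ∀ y, ρ₀ (κ₀ (augment S)) (p.1, y) = decide (p.2 = y) := fun y =>
      hcons _ hS.augment _ (mem_augment.mpr ⟨p, hp, y, rfl⟩)
    obtain ⟨c, -, hc⟩ := hS
    have hsplit : splitChunks L ((graphCompress enc κ₀ S).1) (graphCompress enc κ₀ S).2
        = (graphStored enc κ₀ S, (κ₀ (augment S)).2) :=
      splitChunks_map_fst_flatMap_snd_append _ _ fun s hs => by
        obtain ⟨t, -, rfl⟩ := List.mem_map.mp hs
        exact hlen _
    have hdecode := map_decodeGraphPoint_graphStored (leftInverse_invFun henc) hsub hc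
    simp only [graphReconstruct, hsplit, hdecode]
    have hspec := Classical.epsilon_spec (p := fun y => ρ₀ (κ₀ (augment S)) (p.1, y) = true)
      ⟨p.2, by simp [hlabel]⟩
    simpa [hlabel, eq_comm] using hspec

/-- Reducing multiclass compression to binary compression: if every binary class of
finite VC dimension `d` has an exact realizable compression scheme of size at most `f d`,
then every multiclass class with finite label set `Y` (`|Y| ≥ 2`) and finite graph
dimension `d_G` has an exact realizable compression scheme of size at most
`f d_G * (1 + ⌈log₂ |Y|⌉)`. -/
theorem multiclass_compression_of_binary {X : Type u} {Y : Type v} [Fintype Y]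
    (hY : 2 ≤ Fintype.card Y) (f : ℕ → ℕ)
    (hbin : ∀ (X' : Type (max u v)) (H : Set (X' → Bool)) (d : ℕ), IsVCDim H d →
      ∃ κ ρ, IsExactRealizableScheme H (f d) κ ρ)
    (C : Set (X → Y)) (dG : ℕ) (hC : IsGraphDim C dG) :
    ∃ κ ρ, IsExactRealizableScheme C (f dG * (1 + Nat.clog 2 (Fintype.card Y))) κ ρ := by
  classical
  have : Nonempty Y := Fintype.card_pos_iff.mp (by omega)
  obtain ⟨κ₀, ρ₀, h₀⟩ := hbin (X × Y) (graphClass C) dG hC.isVCDim_graphClass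
  obtain ⟨enc, henc, hlen⟩ := exists_injective_bitstring Y
  exact ⟨_, _, h₀.of_graphClass henc hlen⟩
end

section
/- Let f : ℕ → ℕ. Suppose that for every domain X' and every binary concept class H ⊆ {0,1}^{X'} with finite VC dimension d, there exists an exact realizable sample compression scheme for H of size at most f(d). Then there is a universal constant c > 0 such that for every class C ⊆ [0,1]^X with finite pseudo-dimension d_P and every ε ∈ (0,1): (i) there exists an ε-approximate realizable compression scheme for C with respect to the ℓ_∞ loss of size at most c·f(d_P)·(1 + log₂(1/ε)); and (ii) for every p ∈ [1,∞), there exists an ε-approximate realizable compression scheme for C with respect to the ℓ_p loss of size at most c·f(d_P)·(1 + (1/p)·log₂(1/ε)). -/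
universe u

/-- `n` points of `X` are P-shattered by the real-valued class `C ⊆ [0,1]^X`. -/
def PShattersN {X : Type*} (C : Set (X → ℝ)) (n : ℕ) : Prop :=
  ∃ (x : Fin n → X) (y : Fin n → ℝ), (∀ i, y i ∈ Set.Icc (0:ℝ) 1) ∧
    ∀ b : Fin n → Bool, ∃ c ∈ C, ∀ i, (c (x i) ≤ y i ↔ b i = true)

/-- `C` has (finite) pseudo-dimension exactly `d`. -/
def IsPseudoDim {X : Type*} (C : Set (X → ℝ)) (d : ℕ) : Prop :=
  PShattersN C d ∧ ¬ PShattersN C (d + 1)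

/-- `(κ, ρ)` is an `ε`-approximate realizable compression scheme for `C ⊆ [0,1]^X` with
respect to the `ℓ_∞` loss, of size at most `k`. -/
def IsApproxLinfScheme {X : Type*} (C : Set (X → ℝ)) (k : ℕ) (ε : ℝ)
    (κ : List (X × ℝ) → List (X × ℝ) × List Bool)
    (ρ : List (X × ℝ) × List Bool → X → ℝ) : Prop :=
  (∀ S : List (X × ℝ), (κ S).1 ⊆ S) ∧
  (∀ T x, ρ T x ∈ Set.Icc (0:ℝ) 1) ∧
  (∀ S : List (X × ℝ), Realizable C S → (κ S).1.length + (κ S).2.length ≤ k) ∧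
  (∀ S : List (X × ℝ), Realizable C S → ∀ p ∈ S, |ρ (κ S) p.1 - p.2| ≤ ε)

/-- `(κ, ρ)` is an `ε`-approximate realizable compression scheme for `C ⊆ [0,1]^X` with
respect to the `ℓ_p` loss, of size at most `k`:
`(1/n) ∑ᵢ |ρ(κ S)(xᵢ) - yᵢ|^p ≤ ε` on every realizable sample. -/
def IsApproxLpScheme {X : Type*} (C : Set (X → ℝ)) (k : ℕ) (p ε : ℝ)
    (κ : List (X × ℝ) → List (X × ℝ) × List Bool)
    (ρ : List (X × ℝ) × List Bool → X → ℝ) : Prop :=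
  (∀ S : List (X × ℝ), (κ S).1 ⊆ S) ∧
  (∀ T x, ρ T x ∈ Set.Icc (0:ℝ) 1) ∧
  (∀ S : List (X × ℝ), Realizable C S → (κ S).1.length + (κ S).2.length ≤ k) ∧
  (∀ S : List (X × ℝ), Realizable C S →
    (S.map (fun q => |ρ (κ S) q.1 - q.2| ^ p)).sum ≤ ε * S.length)

/-!
A class `C ⊆ [0,1]^X` is traded for its threshold class `{(x, s) ↦ [c x ≤ s]}` on `X × ℝ`,
whose VC dimension is the pseudo-dimension of `C`. A real sample is replaced by its labelled
points at the thresholds `s = ε, 2ε, …, ⌈1/ε⌉ε`; the binary scheme compresses this grid sample,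
and each grid point it keeps is stored as the sample point it comes from plus the
`⌈log₂ (1/ε)⌉`-bit index of its threshold. The decoder rebuilds the binary hypothesis and
predicts `ε` times the number of grid thresholds it places below `c x`, which is within `ε` of
`c x`. For `ℓ_p` it suffices to run the `ℓ_∞` scheme at accuracy `ε ^ (1/p)`.
-/
namespace IndexCode

variable {α : Type*} (B : ℕ)

def natToBits : ℕ → ℕ → List Bool
  | 0, _ => []
  | B + 1, t => (t % 2 == 1) :: natToBits B (t / 2)

def natOfBits : List Bool → ℕ
  | [] => 0
  | b :: l => b.toNat + 2 * natOfBits l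

@[simp]
lemma length_natToBits (t : ℕ) : (natToBits B t).length = B := by
  induction B generalizing t with
  | zero => rfl
  | succ B ih => simp [natToBits, ih]

lemma natOfBits_natToBits {t : ℕ} (ht : t < 2 ^ B) : natOfBits (natToBits B t) = t := by
  induction B generalizing t with
  | zero => simp_all [natToBits, natOfBits]
  | succ B ih =>
    rw [natToBits, natOfBits, ih (by omega)]
    rcases Nat.mod_two_eq_zero_or_one t with h | h <;> simp [h] <;> omega

def encode (w : List (α × ℕ)) (bits : List Bool) : List α × List Bool :=
  (w.map Prod.fst, w.flatMap (fun u => natToBits B u.2) ++ bits)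

def decode : List α → List Bool → List (α × ℕ) × List Bool
  | [], bits => ([], bits)
  | a :: as, bits =>
    let rest := decode as (bits.drop B)
    ((a, natOfBits (bits.take B)) :: rest.1, rest.2)

lemma decode_encode (w : List (α × ℕ)) (bits : List Bool) (hw : ∀ u ∈ w, u.2 < 2 ^ B) :
    decode B (encode B w bits).1 (encode B w bits).2 = (w, bits) := by
  induction w with
  | nil => rfl
  | cons u w ih =>
    have hB : (natToBits B u.2).length = B := length_natToBits B u.2
    simp only [encode] at ih ⊢
    simp only [List.map_cons, List.flatMap_cons, List.append_assoc, decode,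
      List.drop_left' hB, List.take_left' hB, natOfBits_natToBits B (hw u (by simp)),
      ih fun v hv => hw v (by simp [hv])]

lemma length_encode (w : List (α × ℕ)) (bits : List Bool) :
    (encode B w bits).1.length + (encode B w bits).2.length
      = (B + 1) * w.length + bits.length := by
  simp only [encode, List.length_map, List.length_append, List.length_flatMap, length_natToBits,
    List.map_const', List.sum_replicate, smul_eq_mul]
  ring

end IndexCode

section LiftedCompression

variable {α β : Type*} (B : ℕ)

open IndexCode

def liftDecode (lift : α → ℕ → β) (P : List α × List Bool) : List β × List Bool :=
  ((decode B P.1 P.2).1.map fun u => lift u.1 u.2, (decode B P.1 P.2).2)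

theorem exists_lifted_compression (lift : α → ℕ → β) (embed : List α → List β)
    (hlift : ∀ S, ∀ q ∈ embed S, ∃ a ∈ S, ∃ t < 2 ^ B, lift a t = q)
    (κ₀ : List β → List β × List Bool) (hsub : ∀ T, (κ₀ T).1 ⊆ T) :
    ∃ κ : List α → List α × List Bool, ∀ S, (κ S).1 ⊆ S ∧
      (κ S).1.length + (κ S).2.length
        = (B + 1) * (κ₀ (embed S)).1.length + (κ₀ (embed S)).2.length ∧
      liftDecode B lift (κ S) = κ₀ (embed S) := by
  have hpre : ∀ S, ∃ w : List {u : α × ℕ // u.1 ∈ S ∧ u.2 < 2 ^ B},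
      w.map (fun u => lift u.1.1 u.1.2) = (κ₀ (embed S)).1 := by
    intro S
    rw [← Set.mem_range, Set.range_list_map]
    intro q hq
    obtain ⟨a, ha, t, ht, rfl⟩ := hlift S q (hsub _ hq)
    exact ⟨⟨(a, t), ha, ht⟩, rfl⟩
  choose w hw using hpre
  refine ⟨fun S => encode B ((w S).map Subtype.val) (κ₀ (embed S)).2, fun S => ⟨?_, ?_, ?_⟩⟩
  · simp only [encode, List.map_map]
    intro a ha
    obtain ⟨u, -, rfl⟩ := List.mem_map.mp ha
    exact u.2.1
  · rw [length_encode, ← hw S, List.length_map, List.length_map]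
  · rw [liftDecode, decode_encode _ _ _ (by simp +contextual), List.map_map]
    exact Prod.ext (hw S) rfl

end LiftedCompression

section Thresholds

variable {X : Type*} {C : Set (X → ℝ)}

def thresholdClass (C : Set (X → ℝ)) : Set (X × ℝ → Bool) :=
  (fun c q => decide (c q.1 ≤ q.2)) '' C

lemma shattersN_thresholdClass_iff (hC : ∀ g ∈ C, ∀ x, g x ∈ Set.Icc (0:ℝ) 1) (n : ℕ) :
    ShattersN (thresholdClass C) n ↔ PShattersN C n := by
  constructor
  · rintro ⟨q, hq⟩
    have hlabel : ∀ b i, ∃ c ∈ C, (c (q i).1 ≤ (q i).2 ↔ b = true) := fun b i => by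
      obtain ⟨-, ⟨c, hc, rfl⟩, hcq⟩ := hq fun _ => b
      exact ⟨c, hc, by rw [← hcq i, decide_eq_true_iff]⟩
    refine ⟨fun i => (q i).1, fun i => (q i).2, fun i => ⟨?_, ?_⟩, fun b => ?_⟩
    · obtain ⟨c, hc, hle⟩ := hlabel true i
      exact (hC c hc _).1.trans (hle.mpr rfl)
    · obtain ⟨c, hc, hle⟩ := hlabel false i
      exact (not_le.mp (mt hle.mp Bool.false_ne_true)).le.trans (hC c hc _).2
    · obtain ⟨-, ⟨c, hc, rfl⟩, hcq⟩ := hq b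
      exact ⟨c, hc, fun i => by rw [← hcq i, decide_eq_true_iff]⟩
  · rintro ⟨x, y, -, hxy⟩
    refine ⟨fun i => (x i, y i), fun b => ?_⟩
    obtain ⟨c, hc, hcb⟩ := hxy b
    exact ⟨_, ⟨c, hc, rfl⟩, fun i => Bool.eq_iff_iff.mpr (by simpa using hcb i)⟩

lemma isVCDim_thresholdClass_iff (hC : ∀ g ∈ C, ∀ x, g x ∈ Set.Icc (0:ℝ) 1) (d : ℕ) :
    IsVCDim (thresholdClass C) d ↔ IsPseudoDim C d := by
  simp only [IsVCDim, IsPseudoDim, shattersN_thresholdClass_iff hC]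

end Thresholds

section Grid

open Finset

variable {X : Type*} {C : Set (X → ℝ)} {ε y : ℝ} {N : ℕ}

noncomputable def gridPoint (ε : ℝ) (a : X × ℝ) (t : ℕ) : (X × ℝ) × Bool :=
  ((a.1, (t + 1) * ε), decide (a.2 ≤ (t + 1) * ε))

noncomputable def gridSample (ε : ℝ) (N : ℕ) (S : List (X × ℝ)) : List ((X × ℝ) × Bool) :=
  S.flatMap fun a => (List.range N).map (gridPoint ε a)

lemma mem_gridSample {S : List (X × ℝ)} {q : (X × ℝ) × Bool} :
    q ∈ gridSample ε N S ↔ ∃ a ∈ S, ∃ t < N, gridPoint ε a t = q := by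
  simp [gridSample]

lemma Realizable.gridSample {S : List (X × ℝ)} (hS : Realizable C S) (ε : ℝ) (N : ℕ) :
    Realizable (thresholdClass C) (gridSample ε N S) := by
  obtain ⟨c, hc, hcS⟩ := hS
  refine ⟨_, ⟨c, hc, rfl⟩, fun q hq => ?_⟩
  obtain ⟨a, ha, t, -, rfl⟩ := mem_gridSample.mp hq
  simp [gridPoint, hcS a ha]

noncomputable def gridEstimate (ε : ℝ) (N : ℕ) (h : X × ℝ → Bool) (x : X) : ℝ :=
  min 1 (ε * #((range N).filter fun t : ℕ => h (x, (t + 1) * ε) = false))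

lemma card_filter_range_mul_lt (hε : 0 < ε) (hy : y ≤ N * ε) :
    #((range N).filter fun t : ℕ => (t + 1) * ε < y) = ⌈y / ε⌉₊ - 1 := by
  have hceil : ⌈y / ε⌉₊ ≤ N := Nat.ceil_le.mpr ((div_le_iff₀ hε).mpr hy)
  have hlt : ∀ t : ℕ, (t + 1) * ε < y ↔ t + 1 < ⌈y / ε⌉₊ := fun t => by
    rw [Nat.lt_ceil, lt_div_iff₀ hε]
    push_cast
    rfl
  rw [← card_range (⌈y / ε⌉₊ - 1)]
  congr 1
  ext t
  simp only [mem_filter, mem_range, hlt]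
  omega

lemma abs_gridEstimate_sub_le {h : X × ℝ → Bool} {x : X} (hε : 0 < ε)
    (hy : y ∈ Set.Icc (0:ℝ) 1) (hN : 1 ≤ N * ε)
    (hh : ∀ t < N, h (x, (t + 1) * ε) = decide (y ≤ (t + 1) * ε)) :
    |gridEstimate ε N h x - y| ≤ ε := by
  have hcount : #((range N).filter fun t : ℕ => h (x, (t + 1) * ε) = false) = ⌈y / ε⌉₊ - 1 := by
    rw [← card_filter_range_mul_lt hε (hy.2.trans hN)]
    refine congrArg card (filter_congr fun t ht => ?_)
    rw [hh t (mem_range.mp ht), decide_eq_false_iff_not, not_le]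
  set K := ⌈y / ε⌉₊
  have hupper : ((K - 1 : ℕ) : ℝ) ≤ y / ε := by
    rcases Nat.eq_zero_or_pos K with hK | hK
    · simp only [hK, zero_tsub, CharP.cast_eq_zero]
      exact div_nonneg hy.1 hε.le
    · exact (Nat.lt_ceil.mp (by omega)).le
  have hlower : y / ε ≤ ((K - 1 : ℕ) : ℝ) + 1 := by
    calc y / ε ≤ K := Nat.le_ceil _
      _ ≤ ((K - 1 : ℕ) : ℝ) + 1 := by exact_mod_cast (by omega : K ≤ K - 1 + 1)
  rw [le_div_iff₀ hε] at hupper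
  rw [div_le_iff₀ hε] at hlower
  rw [gridEstimate, hcount, min_eq_right (by linarith [hy.2]), abs_le]
  constructor <;> linarith

end Grid

lemma le_two_pow_ceil_logb {x : ℝ} (hx : 0 < x) : x ≤ 2 ^ ⌈Real.logb 2 x⌉₊ := by
  calc x = 2 ^ Real.logb 2 x := (Real.rpow_logb two_pos (by norm_num) hx).symm
    _ ≤ 2 ^ (⌈Real.logb 2 x⌉₊ : ℝ) :=
      Real.rpow_le_rpow_of_exponent_le one_le_two (Nat.le_ceil _)
    _ = 2 ^ ⌈Real.logb 2 x⌉₊ := Real.rpow_natCast _ _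

theorem exists_approxLinfScheme {X : Type*} {C : Set (X → ℝ)}
    (hC : ∀ g ∈ C, ∀ x, g x ∈ Set.Icc (0:ℝ) 1) {k : ℕ}
    {κ₀ : List ((X × ℝ) × Bool) → List ((X × ℝ) × Bool) × List Bool}
    {ρ₀ : List ((X × ℝ) × Bool) × List Bool → X × ℝ → Bool}
    (hs : IsExactRealizableScheme (thresholdClass C) k κ₀ ρ₀) {ε : ℝ} (hε : 0 < ε) :
    ∃ κ ρ, IsApproxLinfScheme C ((⌈Real.logb 2 (1 / ε)⌉₊ + 1) * k) ε κ ρ := by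
  obtain ⟨hsub, hsize, hexact⟩ := hs
  set B := ⌈Real.logb 2 (1 / ε)⌉₊
  set N := ⌈1 / ε⌉₊
  have hN : 1 ≤ N * ε := (div_le_iff₀ hε).mp (Nat.le_ceil _)
  have hNB : N ≤ 2 ^ B := Nat.ceil_le.mpr (by exact_mod_cast le_two_pow_ceil_logb (by positivity))
  obtain ⟨κ, hκ⟩ := exists_lifted_compression B (gridPoint ε) (gridSample ε N)
    (fun S q hq => by
      obtain ⟨a, ha, t, ht, rfl⟩ := mem_gridSample.mp hq
      exact ⟨a, ha, t, ht.trans_le hNB, rfl⟩) κ₀ hsub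
  refine ⟨κ, fun T => gridEstimate ε N (ρ₀ (liftDecode B (gridPoint ε) T)), fun S => (hκ S).1,
    fun T x => ⟨le_min zero_le_one (by positivity), min_le_left _ _⟩, fun S hS => ?_,
    fun S hS a ha => ?_⟩
  · have hk := hsize _ (hS.gridSample ε N)
    rw [(hκ S).2.1]
    nlinarith
  · beta_reduce
    rw [(hκ S).2.2]
    have hy : a.2 ∈ Set.Icc (0:ℝ) 1 := by
      obtain ⟨c, hc, hcS⟩ := hS
      exact hcS a ha ▸ hC c hc a.1
    refine abs_gridEstimate_sub_le hε hy hN fun t ht => ?_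
    exact hexact _ (hS.gridSample ε N) _ (mem_gridSample.mpr ⟨a, ha, t, ht, rfl⟩)

lemma IsApproxLinfScheme.isApproxLpScheme {X : Type*} {C : Set (X → ℝ)} {k : ℕ} {p ε : ℝ}
    {κ : List (X × ℝ) → List (X × ℝ) × List Bool} {ρ : List (X × ℝ) × List Bool → X → ℝ}
    (h : IsApproxLinfScheme C k (ε ^ p⁻¹) κ ρ) (hp : 0 < p) (hε : 0 ≤ ε) :
    IsApproxLpScheme C k p ε κ ρ := by
  obtain ⟨hsub, hrange, hsize, herr⟩ := h
  refine ⟨hsub, hrange, hsize, fun S hS => ?_⟩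
  have hpoint : ∀ z ∈ S.map (fun q => |ρ (κ S) q.1 - q.2| ^ p), z ≤ ε := by
    simp only [List.mem_map]
    rintro _ ⟨q, hq, rfl⟩
    calc |ρ (κ S) q.1 - q.2| ^ p ≤ (ε ^ p⁻¹) ^ p :=
          Real.rpow_le_rpow (abs_nonneg _) (herr S hS q hq) hp.le
      _ = ε := Real.rpow_inv_rpow hε hp.ne'
  calc (S.map (fun q => |ρ (κ S) q.1 - q.2| ^ p)).sum ≤ S.length • ε := by
        simpa using List.sum_le_card_nsmul _ ε hpoint
    _ = ε * S.length := by rw [nsmul_eq_mul, mul_comm]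

lemma ceil_add_one_mul_le {L : ℝ} (hL : 0 ≤ L) (n : ℕ) :
    (((⌈L⌉₊ + 1) * n : ℕ) : ℝ) ≤ 2 * n * (1 + L) := by
  have := Nat.ceil_lt_add_one hL
  push_cast
  nlinarith [n.cast_nonneg (α := ℝ)]

/-- Reducing approximate compression for regression to binary compression: if every
binary class of finite VC dimension `d` has an exact realizable compression scheme of
size at most `f d`, then there is a universal constant `c > 0` such that every class
`C ⊆ [0,1]^X` of finite pseudo-dimension `d_P` admits, for every `ε ∈ (0,1)`, an
`ε`-approximate realizable `ℓ_∞` scheme of size at most `c·f(d_P)·(1 + log₂(1/ε))` and,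
for every `p ∈ [1,∞)`, an `ε`-approximate realizable `ℓ_p` scheme of size at most
`c·f(d_P)·(1 + (1/p)·log₂(1/ε))`. -/
theorem regression_approx_compression_of_binary (f : ℕ → ℕ)
    (hbin : ∀ (X' : Type u) (H : Set (X' → Bool)) (d : ℕ), IsVCDim H d →
      ∃ κ ρ, IsExactRealizableScheme H (f d) κ ρ) :
    ∃ c : ℝ, 0 < c ∧
      ∀ (X : Type u) (C : Set (X → ℝ)),
        (∀ g ∈ C, ∀ x, g x ∈ Set.Icc (0:ℝ) 1) →
        ∀ dP : ℕ, IsPseudoDim C dP →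
        ∀ ε : ℝ, 0 < ε → ε < 1 →
          (∃ k : ℕ, (k : ℝ) ≤ c * f dP * (1 + Real.logb 2 (1 / ε)) ∧
            ∃ κ ρ, IsApproxLinfScheme C k ε κ ρ) ∧
          (∀ p : ℝ, 1 ≤ p →
            ∃ k : ℕ, (k : ℝ) ≤ c * f dP * (1 + (1 / p) * Real.logb 2 (1 / ε)) ∧
              ∃ κ ρ, IsApproxLpScheme C k p ε κ ρ) := by
  refine ⟨2, two_pos, fun X C hC dP hdP ε hε0 hε1 => ?_⟩
  obtain ⟨κ₀, ρ₀, hs⟩ :=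
    hbin _ (thresholdClass C) dP ((isVCDim_thresholdClass_iff hC dP).mpr hdP)
  have hlog : 0 ≤ Real.logb 2 (1 / ε) :=
    Real.logb_nonneg one_lt_two ((le_div_iff₀ hε0).mpr (by linarith))
  refine ⟨⟨_, ceil_add_one_mul_le hlog _, exists_approxLinfScheme hC hs hε0⟩, fun p hp => ?_⟩
  have hp0 : 0 < p := one_pos.trans_le hp
  have hlog_p : Real.logb 2 (1 / ε ^ p⁻¹) = 1 / p * Real.logb 2 (1 / ε) := by
    simp only [one_div, Real.logb_inv, Real.logb_rpow_eq_mul_logb_of_pos hε0]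
    ring
  obtain ⟨κ, ρ, h⟩ := exists_approxLinfScheme hC hs (Real.rpow_pos_of_pos hε0 p⁻¹)
  refine ⟨_, ?_, κ, ρ, h.isApproxLpScheme hp0 hε0.le⟩
  rw [← hlog_p]
  exact ceil_add_one_mul_le (hlog_p ▸ by positivity) _
end

section
/- Let C ⊆ [0,1]^X be a real-valued concept class, and let C_Y = {g_c : c ∈ C} ⊆ {0,1}^{X×[0,1]} with g_c(x,y) = 1[c(x) = y]. If C_Y admits a stable infinitized sample compression scheme of size at most k, or a stable inflated compression scheme of size at most k, then C admits a stable exact realizable sample compression scheme of size at most k. -/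
/-!
A finite sample `S ⊆ X × [0,1]` is inflated into the binary sample of all
`((x, y'), 1[y' = y])` with `(x, y) ∈ S` and `y' ∈ [0,1]`; it is realizable by `C_Y` and involves
only the finitely many `x` of `S`. Compressing it with the binary scheme and relabelling each kept
example `((x, y'), b)` as `(x, S(x))` gives a subsample of `S`. Reconstruction inflates the
compressed subsample and compresses again: by stability this yields the compression of the
inflation of `S`, whose reconstruction accepts exactly the label `S(x) ∈ [0,1]` at `x`.
-/

universe u

/-- A compression function on finite samples is stable. -/
def IsStable {X Y : Type*} (C : Set (X → Y))
    (κ : List (X × Y) → List (X × Y) × List Bool) : Prop :=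
  ∀ S T : List (X × Y), Realizable C S → (κ S).1 ⊆ T → T ⊆ S → κ T = κ S

/-- A (possibly infinite) sample `S` is realizable by the concept class `C`. -/
def RealizableSet {X Y : Type*} (C : Set (X → Y)) (S : Set (X × Y)) : Prop :=
  ∃ c ∈ C, ∀ p ∈ S, c p.1 = p.2

/-- `(κ, ρ)` is an infinitized sample compression scheme for `C` of size at most `k`. -/
def IsInfinitizedScheme {X Y : Type*} (C : Set (X → Y)) (k : ℕ)
    (κ : Set (X × Y) → List (X × Y) × List Bool)
    (ρ : List (X × Y) × List Bool → X → Y) : Prop :=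
  (∀ S : Set (X × Y), ∀ p ∈ (κ S).1, p ∈ S) ∧
  (∀ S : Set (X × Y), RealizableSet C S → (κ S).1.length + (κ S).2.length ≤ k) ∧
  (∀ S : Set (X × Y), RealizableSet C S → ∀ p ∈ S, ρ (κ S) p.1 = p.2)

/-- An infinitized compression function is stable. -/
def IsStableInf {X Y : Type*} (C : Set (X → Y))
    (κ : Set (X × Y) → List (X × Y) × List Bool) : Prop :=
  ∀ S T : Set (X × Y), RealizableSet C S → (∀ p ∈ (κ S).1, p ∈ T) → T ⊆ S → κ T = κ S

/-- The examples of `S ⊆ (X × Y) × {0,1}` involve only finitely many distinct `x ∈ X`. -/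
def FinSupportX {X Y : Type*} (S : Set ((X × Y) × Bool)) : Prop :=
  Set.Finite {x : X | ∃ (y : Y) (z : Bool), ((x, y), z) ∈ S}

/-- `(κ, ρ)` is an inflated compression scheme for the binary class `H ⊆ {0,1}^{X×Y}`
of size at most `k`. -/
def IsInflatedScheme {X Y : Type*} (H : Set (X × Y → Bool)) (k : ℕ)
    (κ : Set ((X × Y) × Bool) → List ((X × Y) × Bool) × List Bool)
    (ρ : List ((X × Y) × Bool) × List Bool → X × Y → Bool) : Prop :=
  (∀ S : Set ((X × Y) × Bool), ∀ p ∈ (κ S).1, p ∈ S) ∧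
  (∀ S : Set ((X × Y) × Bool), RealizableSet H S → FinSupportX S →
    (κ S).1.length + (κ S).2.length ≤ k) ∧
  (∀ S : Set ((X × Y) × Bool), RealizableSet H S → FinSupportX S →
    ∀ p ∈ S, ρ (κ S) p.1 = p.2)

/-- An inflated compression function is stable. -/
def IsStableInflated {X Y : Type*} (H : Set (X × Y → Bool))
    (κ : Set ((X × Y) × Bool) → List ((X × Y) × Bool) × List Bool) : Prop :=
  ∀ S T : Set ((X × Y) × Bool), RealizableSet H S → FinSupportX S →
    (∀ p ∈ (κ S).1, p ∈ T) → T ⊆ S → κ T = κ S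

/-- The binary class `C_Y = {g_c : c ∈ C}` over the domain `X × [0,1]`,
where `g_c (x, y) = 1[c x = y]`, for a real-valued class `C ⊆ [0,1]^X`. -/
def CYr {X : Type*} (C : Set (X → ℝ)) : Set (X × Set.Icc (0:ℝ) 1 → Bool) :=
  {g | ∃ c ∈ C, ∀ p : X × Set.Icc (0:ℝ) 1, (g p = true ↔ c p.1 = (p.2 : ℝ))}

open Set

theorem IsInfinitizedScheme.isInflatedScheme {X Y : Type*} {H : Set (X × Y → Bool)} {k : ℕ}
    {κ : Set ((X × Y) × Bool) → List ((X × Y) × Bool) × List Bool}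
    {ρ : List ((X × Y) × Bool) × List Bool → X × Y → Bool}
    (h : IsInfinitizedScheme H k κ ρ) : IsInflatedScheme H k κ ρ :=
  ⟨h.1, fun S hS _ => h.2.1 S hS, fun S hS _ => h.2.2 S hS⟩

theorem IsStableInf.isStableInflated {X Y : Type*} {H : Set (X × Y → Bool)}
    {κ : Set ((X × Y) × Bool) → List ((X × Y) × Bool) × List Bool}
    (h : IsStableInf H κ) : IsStableInflated H κ :=
  fun S T hS _ => h S T hS

theorem Realizable.mono {X Y : Type*} {C : Set (X → Y)} {S T : List (X × Y)}
    (hS : Realizable C S) (hTS : T ⊆ S) : Realizable C T :=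
  let ⟨c, hcC, hc⟩ := hS
  ⟨c, hcC, fun p hp => hc p (hTS hp)⟩

section Inflation

variable {X : Type*}

def inflate (S : List (X × ℝ)) : Set ((X × Icc (0:ℝ) 1) × Bool) :=
  {p | ∃ q ∈ S, p.1.1 = q.1 ∧ (p.2 = true ↔ (p.1.2 : ℝ) = q.2)}

/-- The label of `x` in `S`; meaningful only when `S` is realizable and mentions `x`. -/
noncomputable def labelOf (S : List (X × ℝ)) (x : X) : ℝ :=
  sSup {y | (x, y) ∈ S}

theorem inflate_mono {S T : List (X × ℝ)} (h : T ⊆ S) : inflate T ⊆ inflate S :=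
  fun _ ⟨q, hq, hx, hy⟩ => ⟨q, h hq, hx, hy⟩

theorem finSupportX_inflate (S : List (X × ℝ)) : FinSupportX (inflate S) := by
  refine (S.finite_toSet.image Prod.fst).subset ?_
  rintro x ⟨y, z, q, hq, hx, -⟩
  exact ⟨q, hq, hx.symm⟩

theorem realizableSet_inflate {C : Set (X → ℝ)} {S : List (X × ℝ)} (hS : Realizable C S) :
    RealizableSet (CYr C) (inflate S) := by
  obtain ⟨c, hcC, hc⟩ := hS
  refine ⟨fun p => decide (c p.1 = p.2), ⟨c, hcC, fun p => decide_eq_true_iff⟩, ?_⟩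
  rintro ⟨⟨x, y⟩, b⟩ ⟨q, hq, rfl, hb⟩
  dsimp only at hb ⊢
  rw [hc q hq, Bool.eq_iff_iff, decide_eq_true_iff, hb, eq_comm]

theorem labelOf_eq {C : Set (X → ℝ)} {S : List (X × ℝ)} (hS : Realizable C S) {x : X} {y : ℝ}
    (hxy : (x, y) ∈ S) : labelOf S x = y := by
  obtain ⟨c, -, hc⟩ := hS
  have hlabels : {y' | (x, y') ∈ S} = {y} := by
    ext y'
    refine ⟨fun h => ?_, fun h => h ▸ hxy⟩
    exact (hc _ h).symm.trans (hc _ hxy)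
  rw [labelOf, hlabels, csSup_singleton]

theorem labelOf_of_mem_inflate {C : Set (X → ℝ)} {S : List (X × ℝ)} (hS : Realizable C S)
    {p : (X × Icc (0:ℝ) 1) × Bool} (hp : p ∈ inflate S) :
    (p.1.1, labelOf S p.1.1) ∈ S ∧ (p.2 = true ↔ (p.1.2 : ℝ) = labelOf S p.1.1) := by
  obtain ⟨q, hq, hx, hy⟩ := hp
  rw [hx, labelOf_eq hS hq]
  exact ⟨hq, hy⟩

def acceptedLabels (f : X × Icc (0:ℝ) 1 → Bool) (x : X) : Set ℝ :=
  {y | ∃ hy : y ∈ Icc (0:ℝ) 1, f (x, ⟨y, hy⟩) = true}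

theorem acceptedLabels_eq_singleton {S : List (X × ℝ)} {f : X × Icc (0:ℝ) 1 → Bool}
    (hf : ∀ p ∈ inflate S, f p.1 = p.2) {x : X} {y : ℝ} (hxy : (x, y) ∈ S)
    (hy : y ∈ Icc (0:ℝ) 1) : acceptedLabels f x = {y} := by
  ext y'
  refine ⟨fun ⟨hy', hfy'⟩ => ?_, fun h => h ▸ ⟨hy, hf ((x, ⟨y, hy⟩), true) ⟨_, hxy, rfl, by simp⟩⟩⟩
  by_contra hne
  have hfalse := hf ((x, ⟨y', hy'⟩), false) ⟨_, hxy, rfl, by simpa using hne⟩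
  simp [hfy'] at hfalse

end Inflation

section Reduction

variable {X : Type*} {C : Set (X → ℝ)} {k : ℕ}
  {κb : Set ((X × Icc (0:ℝ) 1) × Bool) → List ((X × Icc (0:ℝ) 1) × Bool) × List Bool}
  {ρb : List ((X × Icc (0:ℝ) 1) × Bool) × List Bool → X × Icc (0:ℝ) 1 → Bool}

variable (C κb) in
open Classical in
noncomputable def compress (S : List (X × ℝ)) : List (X × ℝ) × List Bool :=
  if Realizable C S then
    ((κb (inflate S)).1.map (fun p => (p.1.1, labelOf S p.1.1)), (κb (inflate S)).2)
  else ([], [])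

variable (κb ρb) in
noncomputable def reconstruct (d : List (X × ℝ) × List Bool) (x : X) : ℝ :=
  sSup (acceptedLabels (ρb (κb (inflate d.1))) x)

theorem compress_of_realizable {S : List (X × ℝ)} (hS : Realizable C S) :
    compress C κb S =
      ((κb (inflate S)).1.map (fun p => (p.1.1, labelOf S p.1.1)), (κb (inflate S)).2) :=
  if_pos hS

theorem mem_compress {S : List (X × ℝ)} (hS : Realizable C S)
    {p : (X × Icc (0:ℝ) 1) × Bool} (hp : p ∈ (κb (inflate S)).1) :
    (p.1.1, labelOf S p.1.1) ∈ (compress C κb S).1 := by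
  rw [compress_of_realizable hS]
  exact List.mem_map_of_mem hp

theorem compress_subset (hb : IsInflatedScheme (CYr C) k κb ρb) (S : List (X × ℝ)) :
    (compress C κb S).1 ⊆ S := by
  by_cases hS : Realizable C S
  · rw [compress_of_realizable hS]
    rintro _ hq
    obtain ⟨p, hp, rfl⟩ := List.mem_map.mp hq
    exact (labelOf_of_mem_inflate hS (hb.1 _ p hp)).1
  · simp [compress, hS]

/-- Every kept binary example is witnessed in `inflate T` by its relabelled copy in `T`. -/
theorem κb_inflate_eq_of_subset (hb : IsInflatedScheme (CYr C) k κb ρb)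
    (hstab : IsStableInflated (CYr C) κb)
    {S T : List (X × ℝ)} (hS : Realizable C S) (hST : (compress C κb S).1 ⊆ T) (hTS : T ⊆ S) :
    κb (inflate T) = κb (inflate S) := by
  refine hstab _ _ (realizableSet_inflate hS) (finSupportX_inflate S) (fun p hp => ?_)
    (inflate_mono hTS)
  exact ⟨_, hST (mem_compress hS hp), rfl, (labelOf_of_mem_inflate hS (hb.1 _ p hp)).2⟩

theorem reconstruct_compress (hC : ∀ c ∈ C, ∀ x, c x ∈ Icc (0:ℝ) 1)
    (hb : IsInflatedScheme (CYr C) k κb ρb) (hstab : IsStableInflated (CYr C) κb)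
    {S : List (X × ℝ)} (hS : Realizable C S) {p : X × ℝ} (hp : p ∈ S) :
    reconstruct κb ρb (compress C κb S) p.1 = p.2 := by
  have hκ : κb (inflate (compress C κb S).1) = κb (inflate S) :=
    κb_inflate_eq_of_subset hb hstab hS (List.Subset.refl _) (compress_subset hb S)
  have hf : ∀ q ∈ inflate S, ρb (κb (inflate S)) q.1 = q.2 :=
    hb.2.2 _ (realizableSet_inflate hS) (finSupportX_inflate S)
  obtain ⟨c, hcC, hc⟩ := hS
  have hlabel : p.2 ∈ Icc (0:ℝ) 1 := hc p hp ▸ hC c hcC p.1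
  rw [reconstruct, hκ, acceptedLabels_eq_singleton hf hp hlabel, csSup_singleton]

theorem isExactRealizableScheme_compress (hC : ∀ c ∈ C, ∀ x, c x ∈ Icc (0:ℝ) 1)
    (hb : IsInflatedScheme (CYr C) k κb ρb) (hstab : IsStableInflated (CYr C) κb) :
    IsExactRealizableScheme C k (compress C κb) (reconstruct κb ρb) := by
  refine ⟨compress_subset hb, fun S hS => ?_,
    fun S hS p hp => reconstruct_compress hC hb hstab hS hp⟩
  rw [compress_of_realizable hS, List.length_map]
  exact hb.2.1 _ (realizableSet_inflate hS) (finSupportX_inflate S)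

theorem isStable_compress (hb : IsInflatedScheme (CYr C) k κb ρb)
    (hstab : IsStableInflated (CYr C) κb) : IsStable C (compress C κb) := by
  intro S T hS hST hTS
  have hT : Realizable C T := hS.mono hTS
  rw [compress_of_realizable hS, compress_of_realizable hT,
    κb_inflate_eq_of_subset hb hstab hS hST hTS]
  refine congrArg (·, _) (List.map_congr_left fun p hp => ?_)
  rw [labelOf_eq hT (hST (mem_compress hS hp))]

end Reduction

/-- If `C_Y` (for a real-valued class `C ⊆ [0,1]^X`) admits a stable infinitized
compression scheme of size at most `k`, or a stable inflated compression scheme of size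
at most `k`, then `C` admits a stable exact realizable compression scheme of size at
most `k`. -/
theorem regression_exact_stable_of_infinitized_or_inflated {X : Type u}
    (C : Set (X → ℝ)) (hC : ∀ c ∈ C, ∀ x, c x ∈ Set.Icc (0:ℝ) 1) (k : ℕ)
    (h : (∃ κb ρb, IsInfinitizedScheme (CYr C) k κb ρb ∧ IsStableInf (CYr C) κb) ∨
         (∃ κb ρb, IsInflatedScheme (CYr C) k κb ρb ∧ IsStableInflated (CYr C) κb)) :
    ∃ κ ρ, IsExactRealizableScheme C k κ ρ ∧ IsStable C κ := by
  obtain ⟨κb, ρb, hb, hstab⟩ := h.elim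
    (fun ⟨κb, ρb, hb, hstab⟩ => ⟨κb, ρb, hb.isInflatedScheme, hstab.isStableInflated⟩) id
  exact ⟨compress C κb, reconstruct κb ρb, isExactRealizableScheme_compress hC hb hstab,
    isStable_compress hb hstab⟩
end

section
/- Let f : ℕ → ℕ, let U : X → 2^X be a perturbation function with x ∈ U(x) for all x and with each U(x) finite, and let M = sup_{x ∈ X} |U(x)| < ∞. Suppose that for every domain X' and every binary concept class H ⊆ {0,1}^{X'} with finite VC dimension d, there exists a stable exact realizable sample compression scheme for H of size at most f(d). Then every binary concept class C ⊆ {0,1}^X with finite VC dimension d_VC admits an adversarially robust sample compression scheme with respect to U of size at most f(d_VC). -/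
universe u

/-- `S` is robustly realizable by `C` with respect to the perturbation function `U`. -/
def RobustRealizable {X : Type*} (C : Set (X → Bool)) (U : X → Set X)
    (S : List (X × Bool)) : Prop :=
  ∃ c ∈ C, ∀ p ∈ S, ∀ z ∈ U p.1, c z = p.2

/-- `(κ, ρ)` is an adversarially robust sample compression scheme for `C` with respect
to the perturbation function `U`, of size at most `k`. -/
def IsRobustScheme {X : Type*} (C : Set (X → Bool)) (U : X → Set X) (k : ℕ)
    (κ : List (X × Bool) → List (X × Bool) × List Bool)
    (ρ : List (X × Bool) × List Bool → X → Bool) : Prop :=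
  (∀ S : List (X × Bool), (κ S).1 ⊆ S) ∧
  (∀ S : List (X × Bool), RobustRealizable C U S →
    (κ S).1.length + (κ S).2.length ≤ k) ∧
  (∀ S : List (X × Bool), RobustRealizable C U S →
    ∀ p ∈ S, ∀ z ∈ U p.1, ρ (κ S) z = p.2)

/-! Inflate a sample `S` to `I S` by replacing each example `(x, y)` with all `(z, y)`, `z ∈ U x`:
a sample is robustly realizable exactly when its inflation is realizable. Compress the inflation with the
stable scheme `κ₀` and send, for each kept inflated example, an original example it comes from,
together with the bits. The decoder inflates what it receives and compresses again; the result
lies between `(κ₀ (I S)).1` and `I S`, so stability returns exactly `κ₀ (I S)`, whose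
reconstruction is correct on all of `I S`. -/

namespace RobustCompression

variable {X Y : Type*} (V : X → Finset X)

noncomputable def inflate (S : List (X × Y)) : List (X × Y) :=
  S.flatMap fun p => (V p.1).toList.map fun z => (z, p.2)

theorem mem_inflate {S : List (X × Y)} {q : X × Y} :
    q ∈ inflate V S ↔ ∃ p ∈ S, q.1 ∈ V p.1 ∧ q.2 = p.2 := by
  simp only [inflate, List.mem_flatMap, List.mem_map, Finset.mem_toList]
  constructor
  · rintro ⟨p, hp, z, hz, rfl⟩
    exact ⟨p, hp, hz, rfl⟩
  · rintro ⟨p, hp, hz, hy⟩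
    exact ⟨p, hp, q.1, hz, Prod.ext rfl hy.symm⟩

theorem inflate_subset_inflate {S T : List (X × Y)} (h : S ⊆ T) : inflate V S ⊆ inflate V T :=
  fun _ hq =>
    let ⟨p, hp, hq⟩ := (mem_inflate V).1 hq
    (mem_inflate V).2 ⟨p, h hp, hq⟩

theorem realizable_inflate {C : Set (X → Y)} {S : List (X × Y)}
    (h : ∃ c ∈ C, ∀ p ∈ S, ∀ z ∈ V p.1, c z = p.2) : Realizable C (inflate V S) := by
  obtain ⟨c, hc, hS⟩ := h
  refine ⟨c, hc, fun q hq => ?_⟩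
  obtain ⟨p, hp, hz, hy⟩ := (mem_inflate V).1 hq
  rw [hy]
  exact hS p hp q.1 hz

open Classical in
/-- Junk value `q` when no example of `S` inflates to `q`. -/
noncomputable def source (S : List (X × Y)) (q : X × Y) : X × Y :=
  if h : ∃ p ∈ S, q.1 ∈ V p.1 ∧ q.2 = p.2 then h.choose else q

theorem source_spec {S : List (X × Y)} {q : X × Y} (hq : q ∈ inflate V S) :
    source V S q ∈ S ∧ q.1 ∈ V (source V S q).1 ∧ q.2 = (source V S q).2 := by
  have h := (mem_inflate V).1 hq
  rw [source, dif_pos h]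
  exact h.choose_spec

theorem map_source_subset {S P : List (X × Y)} (hP : P ⊆ inflate V S) :
    P.map (source V S) ⊆ S := by
  intro p hp
  obtain ⟨q, hq, rfl⟩ := List.mem_map.1 hp
  exact (source_spec V (hP hq)).1

theorem subset_inflate_map_source {S P : List (X × Y)} (hP : P ⊆ inflate V S) :
    P ⊆ inflate V (P.map (source V S)) := by
  intro q hq
  obtain ⟨-, hz, hy⟩ := source_spec V (hP hq)
  exact (mem_inflate V).2 ⟨source V S q, List.mem_map_of_mem hq, hz, hy⟩

section Compress

variable (κ₀ : List (X × Y) → List (X × Y) × List Bool)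

noncomputable def compress (S : List (X × Y)) : List (X × Y) × List Bool :=
  ((κ₀ (inflate V S)).1.map (source V S), (κ₀ (inflate V S)).2)

noncomputable def reconstruct (ρ₀ : List (X × Y) × List Bool → X → Y)
    (T : List (X × Y) × List Bool) : X → Y :=
  ρ₀ (κ₀ (inflate V T.1))

theorem compress_subset (hκ₀ : ∀ S, (κ₀ S).1 ⊆ S) (S : List (X × Y)) :
    (compress V κ₀ S).1 ⊆ S :=
  map_source_subset V (hκ₀ _)

theorem compress_size (S : List (X × Y)) :
    (compress V κ₀ S).1.length + (compress V κ₀ S).2.length =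
      (κ₀ (inflate V S)).1.length + (κ₀ (inflate V S)).2.length := by
  simp only [compress, List.length_map]

theorem apply_inflate_compress_fst {C : Set (X → Y)} (hκ₀ : ∀ S, (κ₀ S).1 ⊆ S)
    (hstab : IsStable C κ₀) {S : List (X × Y)} (hS : Realizable C (inflate V S)) :
    κ₀ (inflate V (compress V κ₀ S).1) = κ₀ (inflate V S) :=
  hstab _ _ hS (subset_inflate_map_source V (hκ₀ _))
    (inflate_subset_inflate V (compress_subset V κ₀ hκ₀ S))

end Compress

theorem isRobustScheme_compress {C : Set (X → Bool)} {k : ℕ}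
    {κ₀ : List (X × Bool) → List (X × Bool) × List Bool}
    {ρ₀ : List (X × Bool) × List Bool → X → Bool}
    (hscheme : IsExactRealizableScheme C k κ₀ ρ₀) (hstab : IsStable C κ₀) :
    IsRobustScheme C (fun x => (V x : Set X)) k (compress V κ₀) (reconstruct V κ₀ ρ₀) := by
  obtain ⟨hsub, hsize, hcorr⟩ := hscheme
  refine ⟨compress_subset V κ₀ hsub, fun S hS => ?_, fun S hS p hp z hz => ?_⟩
  · rw [compress_size]
    exact hsize _ (realizable_inflate V hS)
  · have hreal := realizable_inflate V hS
    rw [reconstruct, apply_inflate_compress_fst V κ₀ hsub hstab hreal]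
    exact hcorr _ hreal (z, p.2) ((mem_inflate V).2 ⟨p, hp, hz, rfl⟩)

end RobustCompression

open RobustCompression in
theorem robust_compression_of_stable_binary_general {X : Type u} (f : ℕ → ℕ)
    (U : X → Set X) (hfin : ∀ x, (U x).Finite)
    (hbin : ∀ (X' : Type u) (H : Set (X' → Bool)) (d : ℕ), IsVCDim H d →
      ∃ κ ρ, IsExactRealizableScheme H (f d) κ ρ ∧ IsStable H κ)
    (C : Set (X → Bool)) (dVC : ℕ) (hC : IsVCDim C dVC) :
    ∃ κ ρ, IsRobustScheme C U (f dVC) κ ρ := by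
  obtain ⟨κ₀, ρ₀, hscheme, hstab⟩ := hbin X C dVC hC
  have hU : U = fun x => ((hfin x).toFinset : Set X) :=
    funext fun x => (Set.Finite.coe_toFinset _).symm
  rw [hU]
  exact ⟨_, _, isRobustScheme_compress _ hscheme hstab⟩

/-- Robust compression assuming stable binary compression: let `U` be a perturbation
function with `x ∈ U x`, each `U x` finite of cardinality at most `M`. If every binary
class of finite VC dimension `d` has a stable exact realizable compression scheme of
size at most `f d`, then every binary class `C` of finite VC dimension `d_VC` admits an
adversarially robust compression scheme with respect to `U` of size at most `f d_VC`. -/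
theorem robust_compression_of_stable_binary {X : Type u} (f : ℕ → ℕ)
    (U : X → Set X) (hU : ∀ x, x ∈ U x) (hfin : ∀ x, (U x).Finite)
    (M : ℕ) (hM : ∀ x, Nat.card (U x) ≤ M)
    (hbin : ∀ (X' : Type u) (H : Set (X' → Bool)) (d : ℕ), IsVCDim H d →
      ∃ κ ρ, IsExactRealizableScheme H (f d) κ ρ ∧ IsStable H κ)
    (C : Set (X → Bool)) (dVC : ℕ) (hC : IsVCDim C dVC) :
    ∃ κ ρ, IsRobustScheme C U (f dVC) κ ρ :=
  robust_compression_of_stable_binary_general f U hfin hbin C dVC hC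
end
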